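/- Let G be a finite simple graph with a sum labeling ℓ, and let v₁, v₂ be vertices with exactly t₁ resp. t₂ terminals. Assume there exists a set W of vertices of G that are pairwise non-equivalent with |W| ≥ 2·(t₁−1)·(t₂−1) + 3, and assume ℓ(v₁) = 1. Then ℓ(v₂) ≤ t₂ − 1. -/

import Mathlib

/-!
Let `L` be the set of labels and, for `a ∈ L`, let `T(a) = {x ∈ L | x + a ∉ L} ∪ {a}`
(`terminalLabels L a`). These are exactly the labels of the terminals of a vertex labelled `a`, so
such a vertex has at least `|T(a)|` terminals; and vertices with equal labels are equivalent, so
`|W| ≤ |L|`.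

Suppose `s = ℓ(v₂) ≥ t₂`, so that `|T(s)| ≤ s`. Send `x ∈ L` to the pair formed by the end of the
run `x, x+1, …` in `L` and the end of the progression `x, x+s, …` in `L`. If two elements collide,
`L` contains `s` consecutive integers; they meet every residue class mod `s`, and since `|T(s)| ≤ s`
each class then contains a single element of `T(s)`, which rules out `2s, 3s, … ∈ L`. Hence a
collision can only involve an `x < s` with `x + s ∈ L`, and sending those to `1` makes the map
injective, so `|L| ≤ |T(1)| · |T(s)|`. As `2 ≤ |T(1)| ≤ t₁` and `2 ≤ |T(s)| ≤ t₂`, this is less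
than `2(t₁-1)(t₂-1)+3 ≤ |L|`.
-/

/-- A (possibly non-injective) sum labeling of a finite simple graph `G`. -/
def IsSumLabeling {V : Type*} (G : SimpleGraph V) (ℓ : V → ℕ) : Prop :=
  (∀ v : V, 1 ≤ ℓ v) ∧
  ∀ u v : V, u ≠ v → (G.Adj u v ↔ ∃ w : V, ℓ u + ℓ v = ℓ w)

/-- Two vertices `u`, `v` are equivalent if `N(u) \ {v} = N(v) \ {u}`. -/
def Equiv' {V : Type*} (G : SimpleGraph V) (u v : V) : Prop :=
  G.neighborSet u \ {v} = G.neighborSet v \ {u}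

open Finset

def terminalLabels (L : Finset ℕ) (a : ℕ) : Finset ℕ :=
  L.filter fun x => x + a ∉ L ∨ x = a

lemma mem_terminalLabels_self {L : Finset ℕ} {a : ℕ} (ha : a ∈ L) : a ∈ terminalLabels L a :=
  mem_filter.2 ⟨ha, Or.inr rfl⟩

/-- The last element of the longest progression `x, x + d, x + 2d, …` contained in `L`. -/
noncomputable def runTop (L : Finset ℕ) (d x : ℕ) : ℕ :=
  x + d * sInf {k | x + d * (k + 1) ∉ L}

section runTop

variable {L : Finset ℕ} {d x : ℕ}

lemma le_runTop : x ≤ runTop L d x := Nat.le_add_right _ _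

lemma runTop_mod : runTop L d x % d = x % d := Nat.add_mul_mod_self_left _ _ _

lemma runTop_add_notMem (hd : 0 < d) : runTop L d x + d ∉ L := by
  have hne : {k | x + d * (k + 1) ∉ L}.Nonempty := by
    refine ⟨L.sup id, fun hmem => ?_⟩
    have := Finset.le_sup (f := id) hmem
    simp only [id] at this
    nlinarith
  have := Nat.sInf_mem hne
  rwa [Set.mem_ofPred_eq, mul_add, mul_one, ← add_assoc] at this

lemma add_mul_mem_of_le_runTop (hd : 0 < d) (hx : x ∈ L) {j : ℕ}
    (hj : x + d * j ≤ runTop L d x) : x + d * j ∈ L := by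
  rcases j with _ | i
  · simpa using hx
  · have hi : i < sInf {k | x + d * (k + 1) ∉ L} := by
      unfold runTop at hj
      have := Nat.le_of_mul_le_mul_left (Nat.le_of_add_le_add_left hj) hd
      omega
    simpa using Nat.notMem_of_lt_sInf hi

lemma mem_of_le_runTop_one (hx : x ∈ L) {y : ℕ} (hxy : x ≤ y) (hy : y ≤ runTop L 1 x) :
    y ∈ L := by
  obtain ⟨j, rfl⟩ := Nat.exists_eq_add_of_le hxy
  simpa using add_mul_mem_of_le_runTop one_pos hx (j := j) (by simpa using hy)

lemma runTop_mem_terminalLabels (hd : 0 < d) (hx : x ∈ L) :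
    runTop L d x ∈ terminalLabels L d :=
  mem_filter.2 ⟨add_mul_mem_of_le_runTop hd hx le_rfl, Or.inl (runTop_add_notMem hd)⟩

end runTop

lemma exists_lt_add_mod_eq {s : ℕ} (y : ℕ) {r : ℕ} (hr : r < s) : ∃ i < s, (y + i) % s = r := by
  have hinj : Set.InjOn (fun i => (y + i) % s) (range s) := by
    intro i hi j hj hij
    have := Nat.ModEq.add_left_cancel' y hij
    rwa [Nat.ModEq, Nat.mod_eq_of_lt (mem_range.1 hi), Nat.mod_eq_of_lt (mem_range.1 hj)] at this
  have himage : (range s).image (fun i => (y + i) % s) = range s :=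
    eq_of_subset_of_card_le (fun _ h => by
      obtain ⟨i, -, rfl⟩ := mem_image.1 h
      exact mem_range.2 (Nat.mod_lt _ (by omega)))
      (card_image_of_injOn hinj).ge
  obtain ⟨i, hi, hir⟩ := mem_image.1 (himage ▸ mem_range.2 hr)
  exact ⟨i, mem_range.1 hi, hir⟩

lemma mul_notMem_of_forall_add_mem {L : Finset ℕ} {s y m : ℕ} (hsL : s ∈ L)
    (hS : (terminalLabels L s).card ≤ s) (hblock : ∀ i < s, y + i ∈ L) (hm : 2 ≤ m) :
    s * m ∉ L := by
  intro hsm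
  set S := terminalLabels L s
  have hs : 0 < s := (card_pos.2 ⟨s, mem_terminalLabels_self hsL⟩).trans_le hS
  set t := runTop L s (s * m)
  have ht : t ∈ S := runTop_mem_terminalLabels hs hsm
  have hts : t ≠ s := by
    have : s * 2 ≤ t := (Nat.mul_le_mul_left s hm).trans le_runTop
    omega
  have hresidues : range s ⊆ (S.erase t).image (· % s) := by
    intro r hr
    obtain ⟨i, hi, hir⟩ := exists_lt_add_mod_eq y (mem_range.1 hr)
    by_cases hr0 : r = 0
    · refine mem_image.2 ⟨s, mem_erase.2 ⟨hts.symm, mem_terminalLabels_self hsL⟩, ?_⟩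
      simp [hr0]
    · refine mem_image.2 ⟨runTop L s (y + i), mem_erase.2 ⟨fun h => hr0 ?_,
        runTop_mem_terminalLabels hs (hblock i hi)⟩, by rw [runTop_mod, hir]⟩
      rw [← hir, ← runTop_mod (L := L), h, runTop_mod, Nat.mul_mod_right]
  have := (card_le_card hresidues).trans card_image_le
  rw [card_range, card_erase_of_mem ht] at this
  omega

lemma add_le_of_mod_eq {s x y : ℕ} (hxy : x < y) (hmod : x % s = y % s) :
    x + s ≤ y := by
  obtain ⟨c, hc⟩ := (Nat.modEq_iff_dvd' hxy.le).1 hmod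
  rcases c with _ | c
  · omega
  · have : s ≤ s * (c + 1) := Nat.le_mul_of_pos_right s (Nat.succ_pos c)
    omega

lemma lt_of_forall_add_mem {L : Finset ℕ} {s x : ℕ} (hsL : s ∈ L)
    (hS : (terminalLabels L s).card ≤ s) (hrun : ∀ i ≤ s, x + i ∈ L) : x < s := by
  have hs : 0 < s := (card_pos.2 ⟨s, mem_terminalLabels_self hsL⟩).trans_le hS
  by_contra hsx
  have hq : x < s * (x / s + 1) := Nat.lt_mul_div_succ x hs
  have hq' : s * (x / s + 1) ≤ x + s := by
    rw [mul_add, mul_one]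
    exact Nat.add_le_add_right (Nat.mul_div_le x s) s
  refine mul_notMem_of_forall_add_mem hsL hS (y := x + 1) (m := x / s + 1)
    (fun i hi => by rw [add_assoc]; exact hrun _ (by omega)) ?_ ?_
  · have := (Nat.one_le_div_iff hs).2 (not_lt.1 hsx)
    omega
  · have := hrun (s * (x / s + 1) - x) (by omega)
    rwa [Nat.add_sub_cancel' hq.le] at this

lemma injOn_runTop_pair {L : Finset ℕ} {s : ℕ} (h0 : 0 ∉ L) (hsL : s ∈ L)
    (hS : (terminalLabels L s).card ≤ s) :
    Set.InjOn (fun x => (if x + s ∈ L ∧ x < s then 1 else runTop L 1 x, runTop L s x)) L := by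
  intro x hx y hy hxy
  by_contra hne
  wlog hlt : x < y generalizing x y
  · exact this hy hx hxy.symm (Ne.symm hne) (lt_of_le_of_ne (not_lt.1 hlt) (Ne.symm hne))
  obtain ⟨h1, hs⟩ := Prod.mk.inj hxy
  have hxs : x + s ≤ y := add_le_of_mod_eq hlt (by rw [← runTop_mod (L := L), hs, runTop_mod])
  have hx0 : x ≠ 0 := fun h => h0 (h ▸ hx)
  by_cases hy' : y + s ∈ L ∧ y < s
  · omega
  rw [if_neg hy'] at h1
  by_cases hx' : x + s ∈ L ∧ x < s
  · rw [if_pos hx'] at h1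
    have : y ≤ 1 := h1 ▸ le_runTop
    omega
  rw [if_neg hx'] at h1
  have hrun : ∀ i ≤ s, x + i ∈ L := fun i hi =>
    mem_of_le_runTop_one hx (Nat.le_add_right x i) (h1 ▸ (by omega : x + i ≤ y).trans le_runTop)
  exact hx' ⟨hrun s le_rfl, lt_of_forall_add_mem hsL hS hrun⟩

lemma card_le_card_terminalLabels_mul {L : Finset ℕ} {s : ℕ} (h0 : 0 ∉ L) (h1 : 1 ∈ L)
    (hsL : s ∈ L) (hS : (terminalLabels L s).card ≤ s) :
    L.card ≤ (terminalLabels L 1).card * (terminalLabels L s).card := by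
  have hs : 0 < s := Nat.pos_of_ne_zero fun h => h0 (h ▸ hsL)
  rw [← card_product]
  refine card_le_card_of_injOn _ (fun x hx => mem_product.2 ⟨?_, runTop_mem_terminalLabels hs hx⟩)
    (injOn_runTop_pair h0 hsL hS)
  dsimp only
  split_ifs
  · exact mem_terminalLabels_self h1
  · exact runTop_mem_terminalLabels one_pos hx

lemma two_le_card_terminalLabels {L : Finset ℕ} {a : ℕ} (h0 : 0 ∉ L) (ha : a ∈ L)
    (hL : 2 ≤ L.card) : 2 ≤ (terminalLabels L a).card := by
  have hne : L.Nonempty := ⟨a, ha⟩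
  have ha0 : 0 < a := Nat.pos_of_ne_zero fun h => h0 (h ▸ ha)
  have hmax : L.max' hne ∈ terminalLabels L a :=
    mem_filter.2 ⟨L.max'_mem hne, Or.inl fun h => by linarith [L.le_max' _ h]⟩
  rw [Nat.succ_le_iff, one_lt_card]
  by_cases hmax_eq : a = L.max' hne
  · obtain ⟨u, hu, v, hv, huv⟩ := one_lt_card.1 (Nat.succ_le_iff.1 hL)
    have hall : ∀ x ∈ L, x ∈ terminalLabels L a := fun x hx' =>
      mem_filter.2 ⟨hx', Or.inl fun h => by
        have hx0 : x ≠ 0 := fun h' => h0 (h' ▸ hx')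
        have := L.le_max' _ h
        omega⟩
    exact ⟨u, hall u hu, v, hall v hv, huv⟩
  · exact ⟨a, mem_terminalLabels_self ha, _, hmax, hmax_eq⟩

namespace IsSumLabeling

variable {V : Type*} {G : SimpleGraph V} {ℓ : V → ℕ}

lemma equiv'_of_eq (hℓ : IsSumLabeling G ℓ) {u w : V} (h : ℓ u = ℓ w) : Equiv' G u w := by
  ext z
  simp only [Set.mem_sdiff, SimpleGraph.mem_neighborSet, Set.mem_singleton_iff]
  constructor
  · rintro ⟨hz, hzw⟩
    refine ⟨(hℓ.2 w z (Ne.symm hzw)).2 ?_, (G.ne_of_adj hz).symm⟩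
    simpa only [h] using (hℓ.2 u z (G.ne_of_adj hz)).1 hz
  · rintro ⟨hz, hzu⟩
    refine ⟨(hℓ.2 u z (Ne.symm hzu)).2 ?_, (G.ne_of_adj hz).symm⟩
    simpa only [h] using (hℓ.2 w z (G.ne_of_adj hz)).1 hz

variable [Fintype V]

lemma ncard_le_card_image (hℓ : IsSumLabeling G ℓ) {W : Set V}
    (hW : ∀ u ∈ W, ∀ w ∈ W, u ≠ w → ¬ Equiv' G u w) : W.ncard ≤ (univ.image ℓ).card := by
  rw [← Set.ncard_coe_finset]
  refine Set.ncard_le_ncard_of_injOn ℓ (fun v _ => mem_image_of_mem ℓ (mem_univ v))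
    (fun u hu w hw huw => ?_) (Set.toFinite _)
  by_contra hne
  exact hW u hu w hw hne (hℓ.equiv'_of_eq huw)

lemma card_terminalLabels_le (hℓ : IsSumLabeling G ℓ) (v : V) :
    (terminalLabels (univ.image ℓ) (ℓ v)).card ≤ {w | ¬ G.Adj v w}.ncard := by
  have hsub : ↑(terminalLabels (univ.image ℓ) (ℓ v)) ⊆ ℓ '' {w | ¬ G.Adj v w} := by
    intro x hx
    obtain ⟨hxL, hx⟩ := mem_filter.1 hx
    obtain ⟨u, -, rfl⟩ := mem_image.1 hxL
    by_cases hadj : G.Adj v u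
    · obtain ⟨w, hw⟩ := (hℓ.2 v u (G.ne_of_adj hadj)).1 hadj
      have huv : ℓ u = ℓ v := hx.resolve_left fun h =>
        h (by rw [add_comm, hw]; exact mem_image_of_mem ℓ (mem_univ w))
      exact ⟨v, G.irrefl, huv.symm⟩
    · exact ⟨u, hadj, rfl⟩
  calc (terminalLabels (univ.image ℓ) (ℓ v)).card
      = (↑(terminalLabels (univ.image ℓ) (ℓ v)) : Set ℕ).ncard := (Set.ncard_coe_finset _).symm
    _ ≤ (ℓ '' {w | ¬ G.Adj v w}).ncard := Set.ncard_le_ncard hsub (Set.toFinite _)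
    _ ≤ {w | ¬ G.Adj v w}.ncard := Set.ncard_image_le (Set.toFinite _)

end IsSumLabeling

/-- If `v₁` and `v₂` have `t₁` resp. `t₂` terminals, the graph has at least
`2(t₁-1)(t₂-1)+3` pairwise non-equivalent vertices, and `ℓ(v₁) = 1`, then
`ℓ(v₂) ≤ t₂ - 1`. -/
theorem merge_with_one {V : Type*} [Fintype V]
    (G : SimpleGraph V) (ℓ : V → ℕ) (hℓ : IsSumLabeling G ℓ)
    (v₁ v₂ : V) (t₁ t₂ : ℕ)
    (ht₁ : Set.ncard {w : V | ¬ G.Adj v₁ w} = t₁)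
    (ht₂ : Set.ncard {w : V | ¬ G.Adj v₂ w} = t₂)
    (W : Set V) (hW : ∀ u ∈ W, ∀ w ∈ W, u ≠ w → ¬ Equiv' G u w)
    (hWcard : 2 * (t₁ - 1) * (t₂ - 1) + 3 ≤ W.ncard)
    (hone : ℓ v₁ = 1) :
    ℓ v₂ ≤ t₂ - 1 := by
  set L := univ.image ℓ
  have h0 : 0 ∉ L := fun h => by
    obtain ⟨v, -, hv⟩ := mem_image.1 h
    exact absurd (hℓ.1 v) (by omega)
  have h1 : 1 ∈ L := hone ▸ mem_image_of_mem ℓ (mem_univ v₁)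
  have hs : ℓ v₂ ∈ L := mem_image_of_mem ℓ (mem_univ v₂)
  have hb₁ : (terminalLabels L 1).card ≤ t₁ := ht₁ ▸ hone ▸ hℓ.card_terminalLabels_le v₁
  have hb₂ : (terminalLabels L (ℓ v₂)).card ≤ t₂ := ht₂ ▸ hℓ.card_terminalLabels_le v₂
  have hL : 2 * (t₁ - 1) * (t₂ - 1) + 3 ≤ L.card := hWcard.trans (hℓ.ncard_le_card_image hW)
  by_contra hlt
  have hprod := card_le_card_terminalLabels_mul h0 h1 hs (by omega)
  have ha := two_le_card_terminalLabels h0 h1 (by omega)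
  have hb := two_le_card_terminalLabels h0 hs (by omega)
  obtain ⟨p, hp⟩ := Nat.exists_eq_add_of_le ha
  obtain ⟨q, hq⟩ := Nat.exists_eq_add_of_le hb
  have hpq : (p + 1) * (q + 1) ≤ (t₁ - 1) * (t₂ - 1) := Nat.mul_le_mul (by omega) (by omega)
  rw [hp, hq] at hprod
  nlinarith
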